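/- Let V be a finite set of n nodes and σ : Finset V → ℝ a monotone and submodular set function. Let r be a ranking of V such that the values M_r(v), v ∈ V, are pairwise distinct, and let r' be the ranking of V that orders V in decreasing order of M_r. Then for every k with 1 ≤ k ≤ n such that the top-k sets differ, T_r(k) ≠ T_{r'}(k), the influence spread strictly increases: I_r(k) < I_{r'}(k). -/

import Mathlib

/-!
Write `T = T_{r'}(k)` and `S = T_r(k)`. Telescoping gives `I_{r'}(k) = σ(T) − σ(∅)`, while
`I_r(k) = ∑_{v ∈ S} M_r(v)`. Since `T` consists of the `k` nodes with the largest (distinct)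
values of `M_r`, any other `k`-set, in particular `S ≠ T`, has strictly smaller `M_r`-sum. Finally,
adding the nodes of `T` in the order of `r`, submodularity bounds each `M_r(v)` by the marginal
gain of `v` over the nodes of `T` added before it, so `∑_{v ∈ T} M_r(v) ≤ σ(T) − σ(∅)`.
-/

open Finset

variable {V : Type*} [Fintype V] [DecidableEq V]

/-- The set of top-`k` nodes of ranking `r` (positions `1,…,k`, i.e. indices `< k`). -/
def topk {n : ℕ} (r : Fin n ≃ V) (k : ℕ) : Finset V :=
  (Finset.univ.filter fun i : Fin n => (i : ℕ) < k).image r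

/-- Ranking-based marginal influence spread `M_r(v) = σ(T_r(i)) − σ(T_r(i−1))`
where `i` is the (1-based) position of `v` in `r`. -/
noncomputable def margM {n : ℕ} (σ : Finset V → ℝ) (r : Fin n ≃ V) (v : V) : ℝ :=
  σ (topk r ((r.symm v : ℕ) + 1)) - σ (topk r (r.symm v))

/-- Influence spread of the top-`k` nodes: `I_r(k) = Σ_{i=1}^k M_r(v_{r_i})`. -/
noncomputable def inflI {n : ℕ} (σ : Finset V → ℝ) (r : Fin n ≃ V) (k : ℕ) : ℝ :=
  ∑ i ∈ Finset.univ.filter (fun i : Fin n => (i : ℕ) < k), margM σ r (r i)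

theorem Finset.sum_lt_sum_of_card_eq_of_ne {ι M : Type*} [DecidableEq ι] [AddCommMonoid M]
    [LinearOrder M] [IsOrderedCancelAddMonoid M] {f : ι → M} {s t : Finset ι}
    (hcard : #s = #t) (hne : s ≠ t) (htop : ∀ a ∈ t, ∀ b ∉ t, f b < f a) :
    ∑ i ∈ s, f i < ∑ i ∈ t, f i := by
  have hst : (s \ t).Nonempty :=
    sdiff_nonempty.2 fun h => hne (eq_of_subset_of_card_le h hcard.ge)
  have hts : (t \ s).Nonempty :=
    sdiff_nonempty.2 fun h => hne (eq_of_subset_of_card_le h hcard.le).symm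
  obtain ⟨a, ha, hmin⟩ := (t \ s).exists_min_image f hts
  have hdiff : ∑ i ∈ s \ t, f i < ∑ i ∈ t \ s, f i :=
    calc ∑ i ∈ s \ t, f i < ∑ _ ∈ s \ t, f a :=
          sum_lt_sum_of_nonempty hst fun b hb => htop a (mem_sdiff.1 ha).1 b (mem_sdiff.1 hb).2
      _ = #(t \ s) • f a := by rw [sum_const, card_sdiff_comm hcard]
      _ ≤ ∑ i ∈ t \ s, f i := card_nsmul_le_sum _ _ _ hmin
  rw [← sum_inter_add_sum_sdiff s t, ← sum_inter_add_sum_sdiff t s, inter_comm t s]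
  exact add_lt_add_right hdiff _

theorem Fin.sum_filter_val_lt {M : Type*} [AddCommMonoid M] {n k : ℕ} (hk : k ≤ n) (g : ℕ → M) :
    ∑ i ∈ univ.filter (fun i : Fin n => (i : ℕ) < k), g i = ∑ i ∈ range k, g i := by
  have hrange : (univ.filter fun i : Fin n => (i : ℕ) < k).map Fin.valEmbedding = range k := by
    ext m
    simp only [mem_map, mem_filter, mem_univ, true_and, Fin.valEmbedding_apply, mem_range]
    exact ⟨fun ⟨i, hi, him⟩ => him ▸ hi, fun hm => ⟨⟨m, by omega⟩, hm, rfl⟩⟩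
  rw [← hrange, sum_map]
  rfl

section Ranking

omit [Fintype V]

variable {n : ℕ}

theorem mem_topk (r : Fin n ≃ V) (k : ℕ) (v : V) : v ∈ topk r k ↔ (r.symm v : ℕ) < k := by
  simp only [topk, mem_image, mem_filter, mem_univ, true_and]
  exact ⟨fun ⟨i, hi, hiv⟩ => by simpa [← hiv] using hi, fun h => ⟨r.symm v, h, r.apply_symm_apply v⟩⟩

@[simp]
theorem topk_zero (r : Fin n ≃ V) : topk r 0 = ∅ := by
  ext v
  simp [mem_topk]

theorem topk_val_add_one (r : Fin n ≃ V) (i : Fin n) :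
    topk r ((i : ℕ) + 1) = insert (r i) (topk r i) := by
  ext v
  rw [mem_insert, mem_topk, mem_topk, Nat.lt_succ_iff_lt_or_eq, Fin.val_inj,
    Equiv.symm_apply_eq, eq_comm (a := v)]
  exact or_comm

theorem card_topk (r : Fin n ≃ V) {k : ℕ} (hk : k ≤ n) : #(topk r k) = k := by
  rw [topk, card_image_of_injective _ r.injective, Fin.card_filter_val_lt, min_eq_right hk]

theorem lt_of_mem_topk_of_notMem_topk {β : Type*} [LinearOrder β] {f : V → β}
    (hf : Function.Injective f) {r : Fin n ≃ V} (hanti : Antitone (f ∘ r)) {k : ℕ} {u w : V}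
    (hu : u ∈ topk r k) (hw : w ∉ topk r k) : f w < f u := by
  rw [mem_topk] at hu hw
  have hle : r.symm u ≤ r.symm w := Fin.le_def.2 (by omega)
  have h := hanti hle
  simp only [Function.comp_apply, Equiv.apply_symm_apply] at h
  exact h.lt_of_ne fun h' => hw (by rwa [hf h'])

variable (σ : Finset V → ℝ) (r : Fin n ≃ V)

theorem inflI_eq_sum_topk (k : ℕ) : inflI σ r k = ∑ v ∈ topk r k, margM σ r v := by
  rw [inflI, topk, sum_image fun _ _ _ _ h => r.injective h]

theorem inflI_eq_sub {k : ℕ} (hk : k ≤ n) : inflI σ r k = σ (topk r k) - σ ∅ := by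
  have hmarg (i : Fin n) : margM σ r (r i) = σ (topk r (i + 1)) - σ (topk r i) := by
    simp [margM]
  simp only [inflI, hmarg]
  rw [Fin.sum_filter_val_lt hk (fun m => σ (topk r (m + 1)) - σ (topk r m)),
    sum_range_sub (fun m => σ (topk r m)), topk_zero]

theorem sum_margM_le_sub
    (hsub : ∀ S T : Finset V, S ⊆ T → ∀ v ∉ T,
      σ (insert v T) - σ T ≤ σ (insert v S) - σ S)
    (S : Finset V) : ∑ v ∈ S, margM σ r v ≤ σ S - σ ∅ := by
  induction S using Finset.induction_on_max_value (fun v => r.symm v) with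
  | empty => simp
  | insert a s has hmax ih =>
    have hs : s ⊆ topk r (r.symm a) := fun x hx => by
      rw [mem_topk]
      exact lt_of_le_of_ne (hmax x hx) fun h => has (r.symm.injective (Fin.ext h) ▸ hx)
    have hmarg : margM σ r a = σ (insert a (topk r (r.symm a))) - σ (topk r (r.symm a)) := by
      rw [margM, topk_val_add_one, Equiv.apply_symm_apply]
    have ha : a ∉ topk r (r.symm a) := by simp [mem_topk]
    have hgain := hsub s _ hs a ha
    rw [sum_insert has]
    linarith

end Ranking

theorem inflI_lt_inflI_sorted_of_topk_ne_general {n : ℕ} (σ : Finset V → ℝ)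
    (hsub : ∀ S T : Finset V, S ⊆ T → ∀ v ∉ T,
      σ (insert v T) - σ T ≤ σ (insert v S) - σ S)
    (r r' : Fin n ≃ V)
    (hdist : Function.Injective (margM σ r))
    (hr' : ∀ i j : Fin n, i ≤ j → margM σ r (r' j) ≤ margM σ r (r' i)) :
    ∀ k : ℕ, 1 ≤ k → k ≤ n → topk r k ≠ topk r' k → inflI σ r k < inflI σ r' k := by
  intro k _ hkn hne
  calc inflI σ r k = ∑ v ∈ topk r k, margM σ r v := inflI_eq_sum_topk σ r k
    _ < ∑ v ∈ topk r' k, margM σ r v :=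
      sum_lt_sum_of_card_eq_of_ne (by rw [card_topk r hkn, card_topk r' hkn]) hne
        fun _ hu _ hw => lt_of_mem_topk_of_notMem_topk hdist hr' hu hw
    _ ≤ σ (topk r' k) - σ ∅ := sum_margM_le_sub σ r hsub _
    _ = inflI σ r' k := (inflI_eq_sub σ r' hkn).symm

/-- if `σ` is monotone and submodular, the values `M_r(v)` are pairwise
distinct, and `r'` orders `V` in decreasing order of `M_r`, then for every `k` with
`1 ≤ k ≤ n` such that `T_r(k) ≠ T_{r'}(k)`, we have `I_r(k) < I_{r'}(k)`. -/
theorem inflI_lt_inflI_sorted_of_topk_ne {n : ℕ} (σ : Finset V → ℝ)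
    (hmono : ∀ S T : Finset V, S ⊆ T → σ S ≤ σ T)
    (hsub : ∀ S T : Finset V, S ⊆ T → ∀ v ∉ T,
      σ (insert v T) - σ T ≤ σ (insert v S) - σ S)
    (r r' : Fin n ≃ V)
    (hdist : Function.Injective (margM σ r))
    (hr' : ∀ i j : Fin n, i ≤ j → margM σ r (r' j) ≤ margM σ r (r' i)) :
    ∀ k : ℕ, 1 ≤ k → k ≤ n → topk r k ≠ topk r' k → inflI σ r k < inflI σ r' k :=
  inflI_lt_inflI_sorted_of_topk_ne_general σ hsub r r' hdist hr'
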